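/- Suppose the graph G = (V, E) is connected, Q ∈ ℝ^{|E|×|V|} is its oriented incidence matrix, and T = {τ_1, …, τ_d} is a row covering of Q in which every block τ_i is an independent edge set of G (no two edges in τ_i share a node), with r the minimum number of blocks containing any single edge. Then the block gossip method with blocks determined by T satisfies E‖c_k − c*‖² ≤ (1 − r·α(G)/(2d))^k ‖c − c*‖², where c is the initial vector of node values, c* = mean(c)·1, and α(G) is the algebraic connectivity of G. -/

import Mathlib

/-! For an independent edge set `τ` the rows of `Q_τ` are orthogonal with `Q_τ Q_τᵀ = 2 I`, so
`Q_τ† = Q_τᵀ / 2` and a gossip step `x ↦ x - ½ Q_τᵀ Q_τ x` lowers `‖x - c*‖²` by exactly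
`½ ‖Q_τ (x - c*)‖²`. Averaged over the `d` blocks every edge is counted at least `r` times, so the
expected decrease is at least `r / (2d) · ‖Q (x - c*)‖² ≥ r α / (2d) · ‖x - c*‖²`. The last step is
the Rayleigh bound for `QᵀQ`, which applies because `x - c*` stays orthogonal to `ker Q`, the
constants of the connected graph. Iterating the one-step bound over independent block choices
gives the rate. -/

open Matrix

noncomputable section

open Classical in

/-- The Moore–Penrose pseudoinverse of a real matrix, defined via the four Penrose
conditions (which always admit a unique solution). -/
def mpinv {m n : Type*} [Fintype m] [Fintype n] (A : Matrix m n ℝ) : Matrix n m ℝ :=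
  if h : ∃ B : Matrix n m ℝ,
      A * B * A = A ∧ B * A * B = B ∧ (A * B)ᵀ = A * B ∧ (B * A)ᵀ = B * A
  then h.choose else 0

/-- Smallest nonzero eigenvalue of a square real matrix. -/
def lambdaMinPos {k : Type*} [Fintype k] [DecidableEq k] (M : Matrix k k ℝ) : ℝ :=
  sInf {μ : ℝ | μ ≠ 0 ∧ μ ∈ spectrum ℝ M}

/-- Largest eigenvalue of a square real matrix. -/
def lambdaMax {k : Type*} [Fintype k] [DecidableEq k] (M : Matrix k k ℝ) : ℝ :=
  sSup (spectrum ℝ M)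

/-- Squared Euclidean norm of a vector. -/
def sqNorm {k : Type*} [Fintype k] (v : k → ℝ) : ℝ := ∑ i, (v i) ^ 2

/-- The row submatrix of `A` with rows indexed by the subset `τ`. -/
def rowSub {ι κ : Type*} (A : Matrix ι κ ℝ) (τ : Finset ι) : Matrix τ κ ℝ :=
  Matrix.of fun i j => A i.1 j

/-- `T = (τ_1, …, τ_d)` is a `(d, a, β, r, R)` row covering of `A`:
the blocks cover all row indices, `a` lower-bounds the smallest nonzero eigenvalue and `β`
upper-bounds the largest eigenvalue of each `A_τ A_τᵀ`, and `r` (resp. `R`) is the minimum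
(resp. maximum) number of blocks containing any single row. -/
structure IsRowCovering {ι κ : Type*} [Fintype ι] [DecidableEq ι] [Fintype κ] {d : ℕ}
    (A : Matrix ι κ ℝ) (τ : Fin d → Finset ι) (a β : ℝ) (r R : ℕ) : Prop where
  cover : ∀ i : ι, ∃ l, i ∈ τ l
  alpha_le : ∀ l, a ≤ lambdaMinPos (rowSub A (τ l) * (rowSub A (τ l))ᵀ)
  le_beta : ∀ l, lambdaMax (rowSub A (τ l) * (rowSub A (τ l))ᵀ) ≤ β
  r_le : ∀ i : ι, r ≤ (Finset.univ.filter fun l => i ∈ τ l).card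
  r_attained : ∃ i : ι, (Finset.univ.filter fun l => i ∈ τ l).card = r
  le_R : ∀ i : ι, (Finset.univ.filter fun l => i ∈ τ l).card ≤ R
  R_attained : ∃ i : ι, (Finset.univ.filter fun l => i ∈ τ l).card = R

/-- One step of the block Kaczmarz method with block `τ`:
`x ↦ x + A_τ† (b_τ − A_τ x)`. -/
def kaczStep {ι κ : Type*} [Fintype ι] [Fintype κ] (A : Matrix ι κ ℝ) (b : ι → ℝ)
    (τ : Finset ι) (x : κ → ℝ) : κ → ℝ :=
  x + (mpinv (rowSub A τ)).mulVec (fun i : τ => b i.1 - (rowSub A τ).mulVec x i)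

/-- The iterates of the block (randomized) Kaczmarz method, as a function of the sequence
`σ` of block choices: `x_k = x_{k-1} + A_τ† (b_τ − A_τ x_{k-1})` with `τ = τs (σ k)`. -/
def kaczIter {ι κ : Type*} [Fintype ι] [Fintype κ] {d : ℕ} (A : Matrix ι κ ℝ) (b : ι → ℝ)
    (τs : Fin d → Finset ι) (x0 : κ → ℝ) : ∀ k : ℕ, (Fin k → Fin d) → κ → ℝ
  | 0, _ => x0
  | (k + 1), σ => kaczStep A b (τs (σ (Fin.last k))) (kaczIter A b τs x0 k (σ ∘ Fin.castSucc))

/-- `Q` is an oriented incidence matrix of the graph `G`, with `hd e` and `tl e` the head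
and tail of the (arbitrary) orientation of the edge indexed by the row `e`: the rows of
`Q` are in bijection with the edges of `G`, and the row of edge `{i, j}` has entry `+1`
in column `i`, `−1` in column `j`, and `0` elsewhere. -/
def IsOrientedIncidence {V E : Type*} [DecidableEq V] (G : SimpleGraph V)
    (hd tl : E → V) (Q : Matrix E V ℝ) : Prop :=
  (∀ e, G.Adj (hd e) (tl e)) ∧
  (∀ a b : V, G.Adj a b → ∃! e : E, s(hd e, tl e) = s(a, b)) ∧
  (∀ e v, Q e v = if v = hd e then 1 else if v = tl e then -1 else 0)

/-- The set of vertices incident to some edge of the block `τ`. -/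
def endpts {V E : Type*} [DecidableEq V] (hd tl : E → V) (τ : Finset E) : Finset V :=
  τ.biUnion fun e => {hd e, tl e}

/-- The edge-induced subgraph determined by the block `τ` is connected: any two of
its vertices are joined by a walk using only edges of `τ`. -/
def IsConnectedBlock {V E : Type*} [DecidableEq V] (hd tl : E → V) (τ : Finset E) : Prop :=
  ∀ a ∈ endpts hd tl τ, ∀ b ∈ endpts hd tl τ,
    (SimpleGraph.fromEdgeSet {p : Sym2 V | ∃ e ∈ τ, s(hd e, tl e) = p}).Reachable a b

/-- `τ` is an independent edge set: no two (distinct) edges of `τ` share a node. -/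
def IsIndepEdgeSet {V E : Type*} (hd tl : E → V) (τ : Finset E) : Prop :=
  ∀ e ∈ τ, ∀ e' ∈ τ, e ≠ e' →
    hd e ≠ hd e' ∧ hd e ≠ tl e' ∧ tl e ≠ hd e' ∧ tl e ≠ tl e'

section PseudoInverse

variable {m n : Type*} [Fintype m] [Fintype n]

theorem eq_of_penrose {A : Matrix m n ℝ} {B C : Matrix n m ℝ}
    (hB1 : A * B * A = A) (hB2 : B * A * B = B) (hB3 : (A * B)ᵀ = A * B) (hB4 : (B * A)ᵀ = B * A)
    (hC1 : A * C * A = A) (hC2 : C * A * C = C) (hC3 : (A * C)ᵀ = A * C) (hC4 : (C * A)ᵀ = C * A) :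
    B = C := by
  have hAC : Aᵀ = Aᵀ * (A * C) := by
    conv_lhs => rw [← hC1]
    rw [Matrix.transpose_mul, hC3]
  have hCA : Aᵀ = C * A * Aᵀ := by
    conv_lhs => rw [← hC1]
    rw [Matrix.mul_assoc, Matrix.transpose_mul, hC4]
  have hAB : A * B = A * C := by
    calc A * B = Bᵀ * Aᵀ := by rw [← Matrix.transpose_mul, hB3]
    _ = (A * B)ᵀ * (A * C) := by rw [hAC, ← Matrix.mul_assoc, ← Matrix.transpose_mul]
    _ = A * B * A * C := by rw [hB3]; simp only [Matrix.mul_assoc]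
    _ = A * C := by rw [hB1]
  have hBA : B * A = C * A := by
    calc B * A = Aᵀ * Bᵀ := by rw [← Matrix.transpose_mul, hB4]
    _ = C * A * (B * A)ᵀ := by rw [hCA, Matrix.mul_assoc, ← Matrix.transpose_mul]
    _ = C * (A * B * A) := by rw [hB4]; simp only [Matrix.mul_assoc]
    _ = C * A := by rw [hB1]
  calc B = C * A * B := by rw [← hBA, hB2]
  _ = C := by rw [Matrix.mul_assoc, hAB, ← Matrix.mul_assoc, hC2]

theorem mpinv_eq_of_penrose {A : Matrix m n ℝ} {B : Matrix n m ℝ}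
    (h1 : A * B * A = A) (h2 : B * A * B = B) (h3 : (A * B)ᵀ = A * B) (h4 : (B * A)ᵀ = B * A) :
    mpinv A = B := by
  have h : ∃ B : Matrix n m ℝ,
      A * B * A = A ∧ B * A * B = B ∧ (A * B)ᵀ = A * B ∧ (B * A)ᵀ = B * A := ⟨B, h1, h2, h3, h4⟩
  obtain ⟨c1, c2, c3, c4⟩ := h.choose_spec
  rw [mpinv, dif_pos h]
  exact eq_of_penrose c1 c2 c3 c4 h1 h2 h3 h4

theorem mpinv_eq_inv_smul_transpose [DecidableEq m] {A : Matrix m n ℝ} {s : ℝ} (hs : s ≠ 0)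
    (h : A * Aᵀ = s • 1) : mpinv A = s⁻¹ • Aᵀ := by
  have hright : A * (s⁻¹ • Aᵀ) = 1 := by
    rw [Matrix.mul_smul, h, smul_smul, inv_mul_cancel₀ hs, one_smul]
  apply mpinv_eq_of_penrose
  · rw [hright, Matrix.one_mul]
  · rw [Matrix.mul_assoc, hright, Matrix.mul_one]
  · rw [hright, Matrix.transpose_one]
  · rw [Matrix.smul_mul, Matrix.transpose_smul, Matrix.transpose_mul, Matrix.transpose_transpose]

end PseudoInverse

theorem sqNorm_eq_dotProduct {k : Type*} [Fintype k] (v : k → ℝ) : sqNorm v = v ⬝ᵥ v := by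
  simp [sqNorm, dotProduct, sq]

theorem sqNorm_nonneg {k : Type*} [Fintype k] (v : k → ℝ) : 0 ≤ sqNorm v :=
  Finset.sum_nonneg fun _ _ => sq_nonneg _

section Rayleigh

variable {ι κ : Type*} [Fintype ι] [Fintype κ]

theorem dotProduct_eq_sum_mul_of_orthonormalBasis (b : OrthonormalBasis ι ℝ (EuclideanSpace ℝ κ))
    (x y : κ → ℝ) : x ⬝ᵥ y = ∑ i, (b i ⬝ᵥ x) * (b i ⬝ᵥ y) := by
  have hinner : ∀ x y : EuclideanSpace ℝ κ, inner ℝ x y = (x : κ → ℝ) ⬝ᵥ y := fun x y => by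
    simp [PiLp.inner_apply, dotProduct, mul_comm]
  have := b.sum_inner_mul_inner (WithLp.toLp 2 x) (WithLp.toLp 2 y)
  simp only [hinner] at this
  rw [← this]
  exact Finset.sum_congr rfl fun i _ => by rw [dotProduct_comm x]

theorem dotProduct_transpose_mul_mulVec (A : Matrix ι κ ℝ) (x y : κ → ℝ) :
    x ⬝ᵥ (Aᵀ * A) *ᵥ y = (A *ᵥ x) ⬝ᵥ (A *ᵥ y) := by
  rw [← Matrix.mulVec_mulVec, dotProduct_transpose_mulVec, dotProduct_comm]

theorem sqNorm_mulVec_eq_sum_eigenvalues_mul [DecidableEq κ] (A : Matrix ι κ ℝ)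
    (hL : (Aᵀ * A).IsHermitian) (v : κ → ℝ) :
    sqNorm (A *ᵥ v) = ∑ i, hL.eigenvalues i * (hL.eigenvectorBasis i ⬝ᵥ v) ^ 2 := by
  rw [sqNorm_eq_dotProduct, ← dotProduct_transpose_mul_mulVec,
    dotProduct_eq_sum_mul_of_orthonormalBasis hL.eigenvectorBasis]
  refine Finset.sum_congr rfl fun i _ => ?_
  have hb : hL.eigenvectorBasis i ⬝ᵥ (Aᵀ * A) *ᵥ v =
      hL.eigenvalues i * (hL.eigenvectorBasis i ⬝ᵥ v) := by
    rw [dotProduct_transpose_mul_mulVec, dotProduct_comm, ← dotProduct_transpose_mul_mulVec,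
      hL.mulVec_eigenvectorBasis, dotProduct_smul, smul_eq_mul, dotProduct_comm v]
  rw [hb]
  ring

theorem lambdaMinPos_mul_sqNorm_le [DecidableEq κ] (A : Matrix ι κ ℝ) {v : κ → ℝ}
    (hv : ∀ u, A *ᵥ u = 0 → u ⬝ᵥ v = 0) :
    lambdaMinPos (Aᵀ * A) * sqNorm v ≤ sqNorm (A *ᵥ v) := by
  have hL : (Aᵀ * A).IsHermitian := by
    simpa using Matrix.isHermitian_conjTranspose_mul_self A
  set b := hL.eigenvectorBasis
  have hbdd : BddBelow {μ : ℝ | μ ≠ 0 ∧ μ ∈ spectrum ℝ (Aᵀ * A)} :=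
    ((Matrix.finite_spectrum _).subset fun μ hμ => hμ.2).bddBelow
  rw [sqNorm_mulVec_eq_sum_eigenvalues_mul A hL, sqNorm_eq_dotProduct,
    dotProduct_eq_sum_mul_of_orthonormalBasis b, Finset.mul_sum]
  refine Finset.sum_le_sum fun i _ => ?_
  by_cases h0 : hL.eigenvalues i = 0
  · have hker : A *ᵥ b i = 0 := by
      rw [← dotProduct_self_eq_zero, ← dotProduct_transpose_mul_mulVec,
        hL.mulVec_eigenvectorBasis, h0, zero_smul, dotProduct_zero]
    rw [hv _ hker, h0]
    simp
  · rw [← sq]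
    exact mul_le_mul_of_nonneg_right (csInf_le hbdd ⟨h0, hL.eigenvalues_mem_spectrum_real i⟩)
      (sq_nonneg _)

end Rayleigh

section Kaczmarz

variable {ι κ : Type*} [Fintype κ] (A : Matrix ι κ ℝ)

theorem rowSub_mulVec_apply (τ : Finset ι) (x : κ → ℝ) (i : τ) :
    (rowSub A τ *ᵥ x) i = (A *ᵥ x) i :=
  rfl

theorem sqNorm_rowSub_mulVec (τ : Finset ι) (x : κ → ℝ) :
    sqNorm (rowSub A τ *ᵥ x) = ∑ i ∈ τ, (A *ᵥ x) i ^ 2 :=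
  Finset.sum_coe_sort τ fun i => (A *ᵥ x) i ^ 2

variable [Fintype ι]

theorem natCast_mul_sqNorm_le_sum_sqNorm_rowSub [DecidableEq ι] {d : ℕ} (τs : Fin d → Finset ι)
    {r : ℕ} (hr : ∀ i : ι, r ≤ (Finset.univ.filter fun l => i ∈ τs l).card) (x : κ → ℝ) :
    r * sqNorm (A *ᵥ x) ≤ ∑ l, sqNorm (rowSub A (τs l) *ᵥ x) := by
  simp only [sqNorm_rowSub_mulVec]
  calc (r : ℝ) * sqNorm (A *ᵥ x)
      ≤ ∑ i, ((Finset.univ.filter fun l => i ∈ τs l).card : ℝ) * (A *ᵥ x) i ^ 2 := by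
        rw [sqNorm, Finset.mul_sum]
        gcongr with i
        exact_mod_cast hr i
    _ = ∑ l, ∑ i ∈ τs l, (A *ᵥ x) i ^ 2 := by
        simp only [← nsmul_eq_mul, ← Finset.sum_const, Finset.sum_filter]
        rw [Finset.sum_comm]
        simp only [← Finset.sum_filter, Finset.filter_mem_eq_inter, Finset.univ_inter]

theorem sqNorm_sub_inv_smul_transpose_mulVec {m : Type*} [Fintype m] [DecidableEq m]
    {B : Matrix m κ ℝ} {s : ℝ} (hs : s ≠ 0) (h : B * Bᵀ = s • 1) (v : κ → ℝ) :
    sqNorm (v - s⁻¹ • (Bᵀ *ᵥ (B *ᵥ v))) = sqNorm v - s⁻¹ * sqNorm (B *ᵥ v) := by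
  have hcross : v ⬝ᵥ (Bᵀ *ᵥ (B *ᵥ v)) = (B *ᵥ v) ⬝ᵥ (B *ᵥ v) := dotProduct_transpose_mulVec _ _ _
  have hgram : (Bᵀ *ᵥ (B *ᵥ v)) ⬝ᵥ (Bᵀ *ᵥ (B *ᵥ v)) = s * ((B *ᵥ v) ⬝ᵥ (B *ᵥ v)) := by
    rw [dotProduct_transpose_mulVec, Matrix.mulVec_mulVec, h, Matrix.smul_mulVec,
      Matrix.one_mulVec, dotProduct_smul, smul_eq_mul]
  simp only [sqNorm_eq_dotProduct, sub_dotProduct, dotProduct_sub, smul_dotProduct,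
    dotProduct_smul, smul_eq_mul, hcross, dotProduct_comm (Bᵀ *ᵥ (B *ᵥ v)) v, hgram]
  field_simp
  ring

variable [DecidableEq ι] {τ : Finset ι} {s : ℝ}

theorem kaczStep_zero_eq (hs : s ≠ 0) (h : rowSub A τ * (rowSub A τ)ᵀ = s • 1) (x : κ → ℝ) :
    kaczStep A 0 τ x = x - s⁻¹ • ((rowSub A τ)ᵀ *ᵥ (rowSub A τ *ᵥ x)) := by
  rw [kaczStep, mpinv_eq_inv_smul_transpose hs h, sub_eq_add_neg, ← Matrix.smul_mulVec,
    ← Matrix.mulVec_neg]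
  congr 2
  funext i
  simp

theorem dotProduct_kaczStep_zero_sub (hs : s ≠ 0) (h : rowSub A τ * (rowSub A τ)ᵀ = s • 1)
    {u : κ → ℝ} (hu : A *ᵥ u = 0) (x y : κ → ℝ) :
    u ⬝ᵥ (kaczStep A 0 τ x - y) = u ⬝ᵥ (x - y) := by
  have hτu : rowSub A τ *ᵥ u = 0 := funext fun i => by rw [rowSub_mulVec_apply, hu]; rfl
  rw [kaczStep_zero_eq A hs h, sub_right_comm, dotProduct_sub, dotProduct_smul,
    dotProduct_transpose_mulVec, hτu, dotProduct_zero, smul_zero, sub_zero]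

theorem sqNorm_kaczStep_zero_sub (hs : s ≠ 0) (h : rowSub A τ * (rowSub A τ)ᵀ = s • 1)
    {y : κ → ℝ} (hy : A *ᵥ y = 0) (x : κ → ℝ) :
    sqNorm (kaczStep A 0 τ x - y) = sqNorm (x - y) - s⁻¹ * sqNorm (rowSub A τ *ᵥ (x - y)) := by
  have hτy : rowSub A τ *ᵥ y = 0 := funext fun i => by rw [rowSub_mulVec_apply, hy]; rfl
  rw [kaczStep_zero_eq A hs h, sub_right_comm, ← sub_zero (rowSub A τ *ᵥ x), ← hτy,
    ← Matrix.mulVec_sub, sqNorm_sub_inv_smul_transpose_mulVec hs h]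

end Kaczmarz

section BlockKaczmarz

variable {ι κ : Type*} [Fintype ι] [Fintype κ] {d : ℕ}

theorem sum_sqNorm_kaczStep_zero_sub_le [DecidableEq ι] [DecidableEq κ] (A : Matrix ι κ ℝ)
    {τs : Fin d → Finset ι} {s : ℝ} (hs : 0 < s)
    (hgram : ∀ l, rowSub A (τs l) * (rowSub A (τs l))ᵀ = s • 1) {r : ℕ}
    (hr : ∀ i : ι, r ≤ (Finset.univ.filter fun l => i ∈ τs l).card)
    {y : κ → ℝ} (hy : A *ᵥ y = 0) {x : κ → ℝ} (hx : ∀ u, A *ᵥ u = 0 → u ⬝ᵥ (x - y) = 0) :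
    (∑ l, sqNorm (kaczStep A 0 (τs l) x - y)) / d ≤
      (1 - r * lambdaMinPos (Aᵀ * A) / (s * d)) * sqNorm (x - y) := by
  rcases Nat.eq_zero_or_pos d with rfl | hd
  · simpa using sqNorm_nonneg (x - y)
  set α := lambdaMinPos (Aᵀ * A)
  have hsum : ∑ l, sqNorm (kaczStep A 0 (τs l) x - y) ≤
      d * sqNorm (x - y) - s⁻¹ * (r * (α * sqNorm (x - y))) := by
    calc ∑ l, sqNorm (kaczStep A 0 (τs l) x - y)
        = d * sqNorm (x - y) - s⁻¹ * ∑ l, sqNorm (rowSub A (τs l) *ᵥ (x - y)) := by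
          simp only [sqNorm_kaczStep_zero_sub A hs.ne' (hgram _) hy, Finset.sum_sub_distrib,
            Finset.sum_const, Finset.card_univ, Fintype.card_fin, nsmul_eq_mul, Finset.mul_sum]
      _ ≤ d * sqNorm (x - y) - s⁻¹ * (r * sqNorm (A *ᵥ (x - y))) := by
          gcongr
          exact natCast_mul_sqNorm_le_sum_sqNorm_rowSub A τs hr _
      _ ≤ d * sqNorm (x - y) - s⁻¹ * (r * (α * sqNorm (x - y))) := by
          gcongr
          exact lambdaMinPos_mul_sqNorm_le A hx
  rw [div_le_iff₀ (by positivity)]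
  refine hsum.trans_eq ?_
  field_simp

variable (A : Matrix ι κ ℝ) (b : ι → ℝ) (τs : Fin d → Finset ι) (x0 : κ → ℝ)

theorem kaczIter_mem {p : (κ → ℝ) → Prop} (hp : ∀ l x, p x → p (kaczStep A b (τs l) x))
    (hx0 : p x0) : ∀ k σ, p (kaczIter A b τs x0 k σ)
  | 0, _ => hx0
  | k + 1, _ => hp _ _ (kaczIter_mem hp hx0 k _)

theorem sum_kaczIter_succ (f : (κ → ℝ) → ℝ) (k : ℕ) :
    ∑ σ : Fin (k + 1) → Fin d, f (kaczIter A b τs x0 (k + 1) σ) =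
      ∑ σ : Fin k → Fin d, ∑ l, f (kaczStep A b (τs l) (kaczIter A b τs x0 k σ)) := by
  rw [← Fintype.sum_equiv (Fin.snocEquiv fun _ => Fin d)
    (fun p => f (kaczStep A b (τs p.1) (kaczIter A b τs x0 k p.2))) _ fun p => ?_,
    Fintype.sum_prod_type, Finset.sum_comm]
  simp [kaczIter, Fin.snocEquiv]

theorem sum_kaczIter_div_pow_le (N : (κ → ℝ) → ℝ) (hN : ∀ x, 0 ≤ N x) {p : (κ → ℝ) → Prop}
    (hp : ∀ l x, p x → p (kaczStep A b (τs l) x)) (hx0 : p x0) {ρ : ℝ}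
    (hρ : ∀ x, p x → (∑ l, N (kaczStep A b (τs l) x)) / d ≤ ρ * N x) (k : ℕ) :
    (∑ σ : Fin k → Fin d, N (kaczIter A b τs x0 k σ)) / (d : ℝ) ^ k ≤ ρ ^ k * N x0 := by
  by_cases hρ0 : 0 ≤ ρ
  · induction k with
    | zero => simp [kaczIter]
    | succ k ih =>
      calc (∑ σ : Fin (k + 1) → Fin d, N (kaczIter A b τs x0 (k + 1) σ)) / (d : ℝ) ^ (k + 1)
          = (∑ σ : Fin k → Fin d, (∑ l, N (kaczStep A b (τs l) (kaczIter A b τs x0 k σ))) / d)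
              / (d : ℝ) ^ k := by
            rw [sum_kaczIter_succ, ← Finset.sum_div, div_div, pow_succ']
        _ ≤ (∑ σ : Fin k → Fin d, ρ * N (kaczIter A b τs x0 k σ)) / (d : ℝ) ^ k := by
            gcongr with σ
            exact hρ _ (kaczIter_mem A b τs x0 hp hx0 k σ)
        _ ≤ ρ ^ (k + 1) * N x0 := by
            rw [← Finset.mul_sum, mul_div_assoc, pow_succ', mul_assoc]
            gcongr
  · -- a negative rate is only possible if `N` vanishes on all of `p`
    have hzero : ∀ x, p x → N x = 0 := fun x hx => by
      have hmean : 0 ≤ (∑ l, N (kaczStep A b (τs l) x)) / d :=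
        div_nonneg (Finset.sum_nonneg fun _ _ => hN _) d.cast_nonneg
      nlinarith [hN x, hρ x hx]
    simp [hzero _ (kaczIter_mem A b τs x0 hp hx0 k _), hzero x0 hx0]

end BlockKaczmarz

namespace IsOrientedIncidence

variable {V E : Type*} [Fintype V] [DecidableEq V] {G : SimpleGraph V} {hd tl : E → V}
  {Q : Matrix E V ℝ}

theorem mulVec_apply (hQ : IsOrientedIncidence G hd tl Q) (x : V → ℝ) (e : E) :
    (Q *ᵥ x) e = x (hd e) - x (tl e) := by
  have hne : hd e ≠ tl e := (hQ.1 e).ne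
  simp [Matrix.mulVec, dotProduct, hQ.2.2, ite_mul, Finset.sum_ite, Finset.filter_ne',
    Finset.filter_eq', hne.symm, ← sub_eq_add_neg]

theorem mulVec_const (hQ : IsOrientedIncidence G hd tl Q) (a : ℝ) :
    Q *ᵥ (fun _ => a) = 0 :=
  funext fun e => by rw [hQ.mulVec_apply, sub_self]; rfl

theorem eq_of_mulVec_eq_zero (hQ : IsOrientedIncidence G hd tl Q) (hG : G.Connected)
    {u : V → ℝ} (hu : Q *ᵥ u = 0) (a b : V) : u a = u b := by
  have hadj : ∀ a b, G.Adj a b → u a = u b := fun a b hab => by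
    obtain ⟨e, he, -⟩ := hQ.2.1 a b hab
    have h0 := congrFun hu e
    rw [hQ.mulVec_apply, Pi.zero_apply, sub_eq_zero] at h0
    rcases Sym2.eq_iff.mp he with ⟨rfl, rfl⟩ | ⟨rfl, rfl⟩
    exacts [h0, h0.symm]
  obtain ⟨w⟩ := hG.preconnected a b
  induction w with
  | nil => rfl
  | cons h _ ih => exact (hadj _ _ h).trans ih

theorem dotProduct_sub_mean_eq_zero (hQ : IsOrientedIncidence G hd tl Q) (hG : G.Connected)
    {u : V → ℝ} (hu : Q *ᵥ u = 0) (c : V → ℝ) :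
    u ⬝ᵥ (c - fun _ => (∑ v, c v) / (Fintype.card V : ℝ)) = 0 := by
  have hV := hG.nonempty
  have hcard : (Fintype.card V : ℝ) ≠ 0 := Nat.cast_ne_zero.mpr Fintype.card_ne_zero
  simp only [dotProduct, hQ.eq_of_mulVec_eq_zero hG hu _ hV.some, ← Finset.mul_sum,
    Pi.sub_apply, Finset.sum_sub_distrib, Finset.sum_const, Finset.card_univ, nsmul_eq_mul]
  field_simp
  ring

variable [DecidableEq E]

theorem rowSub_mul_transpose_self (hQ : IsOrientedIncidence G hd tl Q) {τ : Finset E}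
    (hτ : IsIndepEdgeSet hd tl τ) : rowSub Q τ * (rowSub Q τ)ᵀ = (2 : ℝ) • 1 := by
  ext e e'
  have hentry : (rowSub Q τ * (rowSub Q τ)ᵀ) e e' = Q e' (hd e) - Q e' (tl e) :=
    hQ.mulVec_apply (Q e') e
  rw [hentry, hQ.2.2, hQ.2.2]
  by_cases h : e = e'
  · subst h
    norm_num [(hQ.1 e).ne.symm]
  · obtain ⟨h1, h2, h3, h4⟩ := hτ e e.2 e' e'.2 (Subtype.coe_ne_coe.mpr h)
    simp [h, h1, h2, h3, h4]

end IsOrientedIncidence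

theorem block_gossip_indep_edge_sets_general {V E : Type*} [Fintype V] [DecidableEq V]
    [Fintype E] [DecidableEq E] {d : ℕ}
    (G : SimpleGraph V) (hG : G.Connected)
    (hd tl : E → V) (Q : Matrix E V ℝ) (hQ : IsOrientedIncidence G hd tl Q)
    (τs : Fin d → Finset E)
    (hindep : ∀ l, IsIndepEdgeSet hd tl (τs l))
    (r : ℕ)
    (hr_le : ∀ e : E, r ≤ (Finset.univ.filter fun l => e ∈ τs l).card)
    (c cstar : V → ℝ)
    (hcstar : cstar = fun _ => (∑ v, c v) / (Fintype.card V : ℝ)) :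
    ∀ k : ℕ,
      (∑ σ : Fin k → Fin d, sqNorm (kaczIter Q 0 τs c k σ - cstar)) / (d : ℝ) ^ k ≤
        (1 - (r : ℝ) * lambdaMinPos (Qᵀ * Q) / (2 * d)) ^ k * sqNorm (c - cstar) := by
  have hgram l := hQ.rowSub_mul_transpose_self (hindep l)
  have hcstar_ker : Q *ᵥ cstar = 0 := hcstar ▸ hQ.mulVec_const _
  refine sum_kaczIter_div_pow_le Q 0 τs c (fun x => sqNorm (x - cstar)) (fun x => sqNorm_nonneg _)
    (p := fun x => ∀ u, Q *ᵥ u = 0 → u ⬝ᵥ (x - cstar) = 0) ?_ ?_ ?_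
  · intro l x hx u hu
    rw [dotProduct_kaczStep_zero_sub Q two_ne_zero (hgram l) hu, hx u hu]
  · intro u hu
    rw [hcstar]
    exact hQ.dotProduct_sub_mean_eq_zero hG hu c
  · exact fun x hx => sum_sqNorm_kaczStep_zero_sub_le Q two_pos hgram hr_le hcstar_ker hx

/-- **Corollary (block gossip with independent edge set blocks).** If `G` is connected
with oriented incidence matrix `Q` and `T = (τ_1, …, τ_d)` is a covering of the edges of
`G` by independent edge sets, with `r` the minimum number of blocks containing any single
edge, then block gossip (expectation = average over all uniform i.i.d. block choice
sequences) satisfies `E‖c_k − c*‖² ≤ (1 − r α(G)/(2d))ᵏ ‖c − c*‖²`, where `c* = mean(c)·1`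
and the algebraic connectivity `α(G)` is the smallest nonzero eigenvalue of `L = QᵀQ`. -/
theorem block_gossip_indep_edge_sets {V E : Type*} [Fintype V] [DecidableEq V]
    [Fintype E] [DecidableEq E] {d : ℕ}
    (G : SimpleGraph V) (hG : G.Connected)
    (hd tl : E → V) (Q : Matrix E V ℝ) (hQ : IsOrientedIncidence G hd tl Q)
    (τs : Fin d → Finset E)
    (hcover : ∀ e : E, ∃ l, e ∈ τs l)
    (hindep : ∀ l, IsIndepEdgeSet hd tl (τs l))
    (r : ℕ)
    (hr_le : ∀ e : E, r ≤ (Finset.univ.filter fun l => e ∈ τs l).card)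
    (hr_att : ∃ e : E, (Finset.univ.filter fun l => e ∈ τs l).card = r)
    (c cstar : V → ℝ)
    (hcstar : cstar = fun _ => (∑ v, c v) / (Fintype.card V : ℝ)) :
    ∀ k : ℕ,
      (∑ σ : Fin k → Fin d, sqNorm (kaczIter Q 0 τs c k σ - cstar)) / (d : ℝ) ^ k ≤
        (1 - (r : ℝ) * lambdaMinPos (Qᵀ * Q) / (2 * d)) ^ k * sqNorm (c - cstar) :=
  block_gossip_indep_edge_sets_general G hG hd tl Q hQ τs hindep r hr_le c cstar hcstar

end
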